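/- Let φ(v) = v²/2 − log v on (0,∞) and, for c > 1/2, let T(c) = √2·∫_{c₁(c)}^{c₂(c)} dv/√(c − φ(v)), where c₁(c) ∈ (0,1) and c₂(c) ∈ (1,∞) are the two roots of φ(v) = c. Then T(c) tends to √2·π as c tends to 1/2 from the right. -/

import Mathlib

/-!
Since `φ(c₁) = φ(c₂) = c` and `φ'' = 1 + v⁻²` lies between `φ''(c₂)` and `φ''(c₁)` on `[c₁, c₂]`,
convexity squeezes `c - φ(v)` between `φ''(c₂)/2` and `φ''(c₁)/2` times the parabola
`(c₂ - v)(v - c₁)`. As `∫_{c₁}^{c₂} dv / √((c₂ - v)(v - c₁)) = π`, this gives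
`√2·π / √(φ''(c₁)/2) ≤ T(c) ≤ √2·π / √(φ''(c₂)/2)`, and both bounds tend to `√2·π` because
`(w - 1)² ≤ 2 (φ(w) - 1/2)` forces both roots to `1`.
-/

open Real intervalIntegral Filter Set MeasureTheory Topology

noncomputable def phi (v : ℝ) : ℝ := v ^ 2 / 2 - log v

lemma sq_sub_one_le_two_mul_phi_sub {w : ℝ} (hw : 0 < w) : (w - 1) ^ 2 ≤ 2 * (phi w - 1 / 2) := by
  have := log_le_sub_one_of_pos hw
  unfold phi
  nlinarith

lemma tendsto_one_of_tendsto_phi {α : Type*} {l : Filter α} {f : α → ℝ}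
    (hpos : ∀ᶠ x in l, 0 < f x) (hf : Tendsto (fun x => phi (f x)) l (𝓝 (1 / 2))) :
    Tendsto f l (𝓝 1) := by
  rw [← tendsto_sub_nhds_zero_iff]
  have hsqrt : Tendsto (fun x => √(2 * (phi (f x) - 1 / 2))) l (𝓝 0) := by
    simpa using ((hf.sub_const (1 / 2)).const_mul 2).sqrt
  refine squeeze_zero_norm' ?_ hsqrt
  filter_upwards [hpos] with x hx
  exact abs_le_sqrt (sq_sub_one_le_two_mul_phi_sub hx)

section Convexity

variable {a b κ v : ℝ}

lemma hasDerivAt_phi_add_mul (hv : v ≠ 0) :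
    HasDerivAt (fun x => phi x + κ * ((b - x) * (x - a))) (v - v⁻¹ + κ * (a + b - 2 * v)) v := by
  have hphi : HasDerivAt phi (v - v⁻¹) v :=
    (((hasDerivAt_pow 2 v).div_const 2).fun_sub (hasDerivAt_log hv)).congr_deriv (by ring)
  have hq : HasDerivAt (fun x => (b - x) * (x - a)) (a + b - 2 * v) v :=
    (((hasDerivAt_id' v).const_sub b).fun_mul ((hasDerivAt_id' v).sub_const a)).congr_deriv
      (by ring)
  exact hphi.add (hq.const_mul κ)

lemma hasDerivAt_deriv_phi_add_mul (hv : v ≠ 0) :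
    HasDerivAt (fun x => x - x⁻¹ + κ * (a + b - 2 * x)) (1 + (v ^ 2)⁻¹ - 2 * κ) v :=
  (((hasDerivAt_id' v).fun_sub (hasDerivAt_inv hv)).fun_add
    ((((hasDerivAt_id' v).const_mul 2).const_sub (a + b)).const_mul κ)).congr_deriv (by ring)

lemma convexOn_phi_add_mul (ha : 0 < a) (hκ : ∀ v ∈ Ioo a b, 2 * κ ≤ 1 + (v ^ 2)⁻¹) :
    ConvexOn ℝ (Icc a b) (fun x => phi x + κ * ((b - x) * (x - a))) := by
  have hne : ∀ v ∈ Icc a b, v ≠ 0 := fun v hv => (ha.trans_le hv.1).ne'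
  refine convexOn_of_hasDerivWithinAt2_nonneg (convex_Icc a b)
    (f' := fun x => x - x⁻¹ + κ * (a + b - 2 * x)) (f'' := fun x => 1 + (x ^ 2)⁻¹ - 2 * κ)
    (fun v hv => (hasDerivAt_phi_add_mul (hne v hv)).continuousAt.continuousWithinAt)
    (fun v hv => ?_) (fun v hv => ?_) (fun v hv => ?_) <;> rw [interior_Icc] at hv
  · exact (hasDerivAt_phi_add_mul (hne v (Ioo_subset_Icc_self hv))).hasDerivWithinAt
  · exact (hasDerivAt_deriv_phi_add_mul (hne v (Ioo_subset_Icc_self hv))).hasDerivWithinAt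
  · linarith [hκ v hv]

lemma concaveOn_phi_add_mul (ha : 0 < a) (hκ : ∀ v ∈ Ioo a b, 1 + (v ^ 2)⁻¹ ≤ 2 * κ) :
    ConcaveOn ℝ (Icc a b) (fun x => phi x + κ * ((b - x) * (x - a))) := by
  have hne : ∀ v ∈ Icc a b, v ≠ 0 := fun v hv => (ha.trans_le hv.1).ne'
  refine concaveOn_of_hasDerivWithinAt2_nonpos (convex_Icc a b)
    (f' := fun x => x - x⁻¹ + κ * (a + b - 2 * x)) (f'' := fun x => 1 + (x ^ 2)⁻¹ - 2 * κ)
    (fun v hv => (hasDerivAt_phi_add_mul (hne v hv)).continuousAt.continuousWithinAt)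
    (fun v hv => ?_) (fun v hv => ?_) (fun v hv => ?_) <;> rw [interior_Icc] at hv
  · exact (hasDerivAt_phi_add_mul (hne v (Ioo_subset_Icc_self hv))).hasDerivWithinAt
  · exact (hasDerivAt_deriv_phi_add_mul (hne v (Ioo_subset_Icc_self hv))).hasDerivWithinAt
  · linarith [hκ v hv]

end Convexity

lemma sub_phi_mem_Icc {a b c v : ℝ} (ha : 0 < a) (hpa : phi a = c) (hpb : phi b = c)
    (hv : v ∈ Icc a b) :
    c - phi v ∈ Icc ((1 + (b ^ 2)⁻¹) / 2 * ((b - v) * (v - a)))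
      ((1 + (a ^ 2)⁻¹) / 2 * ((b - v) * (v - a))) := by
  have hab : a ≤ b := hv.1.trans hv.2
  have hb : ∀ x ∈ Ioo a b, 2 * ((1 + (b ^ 2)⁻¹) / 2) ≤ 1 + (x ^ 2)⁻¹ := fun x hx => by
    have : (b ^ 2)⁻¹ ≤ (x ^ 2)⁻¹ :=
      inv_anti₀ (pow_pos (ha.trans hx.1) 2) (pow_le_pow_left₀ (ha.trans hx.1).le hx.2.le 2)
    linarith
  have ha' : ∀ x ∈ Ioo a b, 1 + (x ^ 2)⁻¹ ≤ 2 * ((1 + (a ^ 2)⁻¹) / 2) := fun x hx => by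
    have : (x ^ 2)⁻¹ ≤ (a ^ 2)⁻¹ := inv_anti₀ (pow_pos ha 2) (pow_le_pow_left₀ ha.le hx.1.le 2)
    linarith
  have hlow := (convexOn_phi_add_mul ha hb).le_max_of_mem_Icc
    (left_mem_Icc.2 hab) (right_mem_Icc.2 hab) hv
  have hupp := (concaveOn_phi_add_mul ha ha').min_le_of_mem_Icc
    (left_mem_Icc.2 hab) (right_mem_Icc.2 hab) hv
  simp only [sub_self, zero_mul, mul_zero, add_zero, hpa, hpb, max_self, min_self] at hlow hupp
  constructor <;> linarith

section ArcsinIntegral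

variable {a b : ℝ}

lemma hasDerivAt_arcsin_chord {v : ℝ} (hv : v ∈ Ioo a b) :
    HasDerivAt (fun x => arcsin ((2 * x - a - b) / (b - a))) (1 / √((b - v) * (v - a))) v := by
  have hba : 0 < b - a := by linarith [hv.1, hv.2]
  have ht : |(2 * v - a - b) / (b - a)| < 1 := by
    rw [abs_div, abs_of_pos hba, div_lt_one hba, abs_lt]
    constructor <;> linarith [hv.1, hv.2]
  have hlin : HasDerivAt (fun x => (2 * x - a - b) / (b - a)) (2 / (b - a)) v :=
    (((((hasDerivAt_id' v).const_mul 2).sub_const a).sub_const b).div_const (b - a)).congr_deriv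
      (by ring)
  refine ((hasDerivAt_arcsin (abs_lt.1 ht).1.ne' (abs_lt.1 ht).2.ne).comp v hlin).congr_deriv ?_
  have hsq : 1 - ((2 * v - a - b) / (b - a)) ^ 2 = (2 / (b - a)) ^ 2 * ((b - v) * (v - a)) := by
    field_simp; ring
  have hQ : 0 < (b - v) * (v - a) := mul_pos (by linarith [hv.2]) (by linarith [hv.1])
  rw [hsq, sqrt_mul (sq_nonneg _), sqrt_sq (by positivity)]
  field_simp

lemma continuous_arcsin_chord : Continuous (fun x => arcsin ((2 * x - a - b) / (b - a))) := by
  fun_prop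

lemma intervalIntegrable_one_div_sqrt_mul_sub (hab : a < b) :
    IntervalIntegrable (fun v => 1 / √((b - v) * (v - a))) volume a b := by
  rw [intervalIntegrable_iff_integrableOn_Ioc_of_le hab.le]
  exact integrableOn_deriv_of_nonneg continuous_arcsin_chord.continuousOn
    (fun v hv => hasDerivAt_arcsin_chord hv) (fun v _ => by positivity)

lemma integral_one_div_sqrt_mul_sub (hab : a < b) :
    ∫ v in a..b, 1 / √((b - v) * (v - a)) = π := by
  rw [integral_eq_sub_of_hasDerivAt_of_le hab.le continuous_arcsin_chord.continuousOn
    (fun v hv => hasDerivAt_arcsin_chord hv) (intervalIntegrable_one_div_sqrt_mul_sub hab)]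
  have hba : b - a ≠ 0 := (sub_pos.2 hab).ne'
  have h1 : (2 * b - a - b) / (b - a) = 1 := by rw [div_eq_one_iff_eq hba]; ring
  have h2 : (2 * a - a - b) / (b - a) = -1 := by rw [div_eq_iff hba]; ring
  rw [h1, h2, arcsin_neg, arcsin_one]
  ring

end ArcsinIntegral

lemma one_div_sqrt_mem_Icc {m M Q s : ℝ} (hm : 0 < m) (hQ : 0 ≤ Q)
    (hs : s ∈ Icc (m * Q) (M * Q)) : 1 / √s ∈ Icc (1 / √M * (1 / √Q)) (1 / √m * (1 / √Q)) := by
  rcases hQ.eq_or_lt with rfl | hQ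
  · obtain rfl : s = 0 := by simpa using hs
    simp
  rw [one_div_mul_one_div, one_div_mul_one_div, ← sqrt_mul' _ hQ.le, ← sqrt_mul' _ hQ.le]
  have hs₀ : 0 < s := (mul_pos hm hQ).trans_le hs.1
  exact ⟨one_div_le_one_div_of_le (sqrt_pos.2 hs₀) (sqrt_le_sqrt hs.2),
    one_div_le_one_div_of_le (sqrt_pos.2 (mul_pos hm hQ)) (sqrt_le_sqrt hs.1)⟩

lemma integral_one_div_sqrt_sub_phi_mem_Icc {a b c : ℝ} (ha : 0 < a) (hab : a < b)
    (hpa : phi a = c) (hpb : phi b = c) :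
    ∫ v in a..b, 1 / √(c - phi v) ∈
      Icc (π / √((1 + (a ^ 2)⁻¹) / 2)) (π / √((1 + (b ^ 2)⁻¹) / 2)) := by
  set g := fun v => 1 / √((b - v) * (v - a))
  have hg : IntervalIntegrable g volume a b := intervalIntegrable_one_div_sqrt_mul_sub hab
  have hbound : ∀ v ∈ Icc a b, 1 / √(c - phi v) ∈
      Icc (1 / √((1 + (a ^ 2)⁻¹) / 2) * g v) (1 / √((1 + (b ^ 2)⁻¹) / 2) * g v) :=
    fun v hv => one_div_sqrt_mem_Icc (by positivity)
      (mul_nonneg (sub_nonneg.2 hv.2) (sub_nonneg.2 hv.1)) (sub_phi_mem_Icc ha hpa hpb hv)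
  have hf : IntervalIntegrable (fun v => 1 / √(c - phi v)) volume a b := by
    refine (hg.const_mul (1 / √((1 + (b ^ 2)⁻¹) / 2))).mono_fun'
      (Measurable.aestronglyMeasurable (by unfold phi; fun_prop)) ?_
    rw [uIoc_of_le hab.le]
    filter_upwards [ae_restrict_mem measurableSet_Ioc] with v hv
    rw [norm_of_nonneg (by positivity)]
    exact (hbound v (Ioc_subset_Icc_self hv)).2
  have hint : ∀ κ : ℝ, π / √κ = ∫ v in a..b, 1 / √κ * g v := fun κ => by
    rw [intervalIntegral.integral_const_mul, integral_one_div_sqrt_mul_sub hab, one_div_mul_eq_div]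
  rw [hint, hint]
  exact ⟨integral_mono_on hab.le (hg.const_mul _) hf fun v hv => (hbound v hv).1,
    integral_mono_on hab.le hf (hg.const_mul _) fun v hv => (hbound v hv).2⟩

theorem stmt_11 (c₁ c₂ : ℝ → ℝ)
    (h : ∀ c ∈ Set.Ioi (1/2 : ℝ),
      c₁ c ∈ Set.Ioo (0:ℝ) 1 ∧ c₂ c ∈ Set.Ioi (1:ℝ) ∧
      (c₁ c) ^ 2 / 2 - Real.log (c₁ c) = c ∧ (c₂ c) ^ 2 / 2 - Real.log (c₂ c) = c) :
    Tendsto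
      (fun c : ℝ =>
        Real.sqrt 2 * ∫ v in (c₁ c)..(c₂ c), 1 / Real.sqrt (c - (v ^ 2 / 2 - Real.log v)))
      (nhdsWithin (1/2 : ℝ) (Set.Ioi (1/2 : ℝ)))
      (nhds (Real.sqrt 2 * π)) := by
  have hid : Tendsto (fun c : ℝ => c) (𝓝[>] (1 / 2)) (𝓝 (1 / 2)) :=
    tendsto_nhdsWithin_of_tendsto_nhds tendsto_id
  have hc₁ : Tendsto c₁ (𝓝[>] (1 / 2)) (𝓝 1) :=
    tendsto_one_of_tendsto_phi (eventually_nhdsWithin_of_forall fun c hc => (h c hc).1.1)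
      (hid.congr' (eventually_nhdsWithin_of_forall fun c hc => (h c hc).2.2.1.symm))
  have hc₂ : Tendsto c₂ (𝓝[>] (1 / 2)) (𝓝 1) :=
    tendsto_one_of_tendsto_phi
      (eventually_nhdsWithin_of_forall fun c hc => one_pos.trans (h c hc).2.1)
      (hid.congr' (eventually_nhdsWithin_of_forall fun c hc => (h c hc).2.2.2.symm))
  have hbound : Tendsto (fun x : ℝ => √2 * (π / √((1 + (x ^ 2)⁻¹) / 2))) (𝓝 1) (𝓝 (√2 * π)) := by
    have : ContinuousAt (fun x : ℝ => √2 * (π / √((1 + (x ^ 2)⁻¹) / 2))) 1 := by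
      fun_prop (disch := norm_num)
    simpa using this.tendsto
  have hT : ∀ c ∈ Ioi (1 / 2 : ℝ), ∫ v in (c₁ c)..(c₂ c), 1 / √(c - phi v) ∈
      Icc (π / √((1 + (c₁ c ^ 2)⁻¹) / 2)) (π / √((1 + (c₂ c ^ 2)⁻¹) / 2)) := fun c hc =>
    have ⟨⟨hpos, hlt⟩, hgt, e₁, e₂⟩ := h c hc
    integral_one_div_sqrt_sub_phi_mem_Icc hpos (hlt.trans hgt) e₁ e₂
  refine tendsto_of_tendsto_of_tendsto_of_le_of_le' (hbound.comp hc₁) (hbound.comp hc₂) ?_ ?_ <;>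
    filter_upwards [self_mem_nhdsWithin] with c hc
  exacts [mul_le_mul_of_nonneg_left (hT c hc).1 (sqrt_nonneg 2),
    mul_le_mul_of_nonneg_left (hT c hc).2 (sqrt_nonneg 2)]
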